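/- arXiv:1805.09163 — 4 statements merged into one kernel-verified Lean document; each statement's English description precedes it below -/
import Mathlib

section
/- Let ε ≠ 0, let V₀ : ℝⁿ → ℝ be twice continuously differentiable, let e : ℝ → ℝⁿ be continuous, t ∈ ℝ, h > 0, and let 𝒜(s) be the operator (𝒜(s)u)(x) = iε (Δu)(x) − i ε⁻¹ ( V₀(x) + e(s)ᵀx ) u(x). Define r(t,h) = (1/h) ∫₀ʰ e(t+ζ) dζ and s(t,h) = 2 ∫₀ʰ (ζ − h/2) e(t+ζ) dζ. Then for every smooth (C⁴) u : ℝⁿ → ℂ and every x ∈ ℝⁿ, the truncated Magnus expansion satisfies, pointwise: ∫₀ʰ (𝒜(t+ζ)u)(x) dζ − (1/2) ∫₀ʰ ∫₀^ζ ( [𝒜(t+ξ), 𝒜(t+ζ)] u )(x) dξ dζ = i h ε (Δu)(x) − i h ε⁻¹ ( V₀(x) + r(t,h)ᵀx ) u(x) − s(t,h)ᵀ (∇u)(x). -/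
/-!
`𝒜(s₁)` and `𝒜(s₂)` differ only by multiplication with `−iε⁻¹ (e(s₂) − e(s₁))ᵀx`, so their
commutator is `[Δ, ℓ] = 2 (e(s₂) − e(s₁))ᵀ∇` for the linear function `ℓ = (e(s₂) − e(s₁))ᵀx`:
the potential `V₀` and the powers of `ε` drop out. The first Magnus term depends affinely on
`e`, so integrating it replaces `e` by its mean `r(t,h)`. In the second term, integration by
parts turns the integral of `e(t+ζ) − e(t+ξ)` over the triangle `0 ≤ ξ ≤ ζ ≤ h` into
`∫₀ʰ (2ζ − h) e(t+ζ) dζ = s(t,h)`.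
-/

open scoped BigOperators

/-- The Laplacian of `u : ℝⁿ → ℂ`, `Δu = ∑ⱼ ∂²u/∂xⱼ²`. -/
noncomputable def laplacian {n : ℕ} (u : (Fin n → ℝ) → ℂ) (x : Fin n → ℝ) : ℂ :=
  ∑ j : Fin n, fderiv ℝ (fun y => fderiv ℝ u y (Pi.single j 1)) x (Pi.single j 1)

/-- The operator `𝒜(s) u = iε Δu − i ε⁻¹ (V₀(x) + e(s)ᵀ x) u`. -/
noncomputable def opA {n : ℕ} (ε : ℝ) (V₀ : (Fin n → ℝ) → ℝ) (e : ℝ → Fin n → ℝ)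
    (s : ℝ) (u : (Fin n → ℝ) → ℂ) (x : Fin n → ℝ) : ℂ :=
  Complex.I * (ε : ℂ) * laplacian u x
    - Complex.I * (ε : ℂ)⁻¹ * ((V₀ x + ∑ j : Fin n, e s j * x j : ℝ) : ℂ) * u x

/-- The averaged laser pulse `r(t,h) = (1/h) ∫₀ʰ e(t+ζ) dζ`. -/
noncomputable def magnusR {n : ℕ} (e : ℝ → Fin n → ℝ) (t h : ℝ) : Fin n → ℝ :=
  (1 / h) • ∫ ζ in (0:ℝ)..h, e (t + ζ)

/-- The drift vector `s(t,h) = 2 ∫₀ʰ (ζ − h/2) e(t+ζ) dζ`. -/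
noncomputable def magnusS {n : ℕ} (e : ℝ → Fin n → ℝ) (t h : ℝ) : Fin n → ℝ :=
  (2 : ℝ) • ∫ ζ in (0:ℝ)..h, (ζ - h / 2) • e (t + ζ)

section Laplacian

variable {n : ℕ}

lemma differentiableAt_fderiv_apply {f : (Fin n → ℝ) → ℂ} (hf : ContDiff ℝ 2 f)
    (v x : Fin n → ℝ) : DifferentiableAt ℝ (fun y => fderiv ℝ f y v) x :=
  ((hf.fderiv_right (m := 1) (by norm_num)).clm_apply contDiff_const).differentiable
    one_ne_zero x

lemma contDiff_laplacian {f : (Fin n → ℝ) → ℂ} {m : WithTop ℕ∞} (hf : ContDiff ℝ (m + 2) f) :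
    ContDiff ℝ m (laplacian f) := by
  have hf' : ContDiff ℝ ((m + 1) + 1) f := by rwa [add_assoc, one_add_one_eq_two]
  exact ContDiff.sum fun j _ =>
    (((hf'.fderiv_right le_rfl).clm_apply contDiff_const).fderiv_right le_rfl).clm_apply
      contDiff_const

lemma laplacian_sub {f g : (Fin n → ℝ) → ℂ} (hf : ContDiff ℝ 2 f) (hg : ContDiff ℝ 2 g)
    (x : Fin n → ℝ) :
    laplacian (fun y => f y - g y) x = laplacian f x - laplacian g x := by
  have hf1 := hf.differentiable two_ne_zero
  have hg1 := hg.differentiable two_ne_zero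
  simp only [laplacian, ← Finset.sum_sub_distrib, fderiv_fun_sub (hf1 _) (hg1 _),
    sub_apply, fderiv_fun_sub (differentiableAt_fderiv_apply hf _ x)
      (differentiableAt_fderiv_apply hg _ x)]

lemma laplacian_const_mul {f : (Fin n → ℝ) → ℂ} (hf : ContDiff ℝ 2 f) (a : ℂ)
    (x : Fin n → ℝ) :
    laplacian (fun y => a * f y) x = a * laplacian f x := by
  have hf1 := hf.differentiable two_ne_zero
  simp only [laplacian, Finset.mul_sum, fderiv_const_mul (hf1 _),
    smul_apply, smul_eq_mul,
    fderiv_const_mul (differentiableAt_fderiv_apply hf _ x)]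

-- `ℓ` has vanishing second derivatives, so only the cross terms of the Leibniz rule survive.
lemma laplacian_clm_mul (ℓ : (Fin n → ℝ) →L[ℝ] ℂ) {u : (Fin n → ℝ) → ℂ}
    (hu : ContDiff ℝ 2 u) (x : Fin n → ℝ) :
    laplacian (fun y => ℓ y * u y) x
      = ℓ x * laplacian u x + 2 * ∑ j, ℓ (Pi.single j 1) * fderiv ℝ u x (Pi.single j 1) := by
  have hu1 := hu.differentiable two_ne_zero
  have hpartial : ∀ j : Fin n,
      (fun y => fderiv ℝ (fun z => ℓ z * u z) y (Pi.single j 1))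
        = fun y => ℓ y * fderiv ℝ u y (Pi.single j 1) + ℓ (Pi.single j 1) * u y := by
    intro j
    funext y
    rw [fderiv_fun_mul (ℓ.differentiableAt) (hu1 y)]
    simp [ContinuousLinearMap.fderiv, mul_comm]
  simp only [laplacian, hpartial, Finset.mul_sum, ← Finset.sum_add_distrib]
  refine Finset.sum_congr rfl fun j _ => ?_
  have hd₁ : DifferentiableAt ℝ (fun y => ℓ y * fderiv ℝ u y (Pi.single j 1)) x :=
    ℓ.differentiableAt.mul (differentiableAt_fderiv_apply hu _ x)
  have hd₂ : DifferentiableAt ℝ (fun y => ℓ (Pi.single j 1) * u y) x :=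
    (differentiableAt_const _).mul (hu1 x)
  rw [fderiv_fun_add hd₁ hd₂,
    fderiv_fun_mul ℓ.differentiableAt (differentiableAt_fderiv_apply hu _ x),
    fderiv_const_mul (hu1 x)]
  simp only [ContinuousLinearMap.fderiv, add_apply, smul_apply, smul_eq_mul]
  ring

lemma sum_ofReal_mul_apply_single (L : (Fin n → ℝ) →L[ℝ] ℂ) (c : Fin n → ℝ) :
    ∑ j, (c j : ℂ) * L (Pi.single j 1) = L c := by
  conv_rhs => rw [pi_eq_sum_univ' c]
  simp [map_sum, Complex.real_smul]

end Laplacian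

section MagnusOperator

variable {n : ℕ}

noncomputable def dotCLM (c : Fin n → ℝ) : (Fin n → ℝ) →L[ℝ] ℝ :=
  ∑ j, c j • ContinuousLinearMap.proj j

@[simp]
lemma dotCLM_apply (c y : Fin n → ℝ) : dotCLM c y = ∑ j, c j * y j := by
  simp [dotCLM]

variable {ε : ℝ} {V₀ : (Fin n → ℝ) → ℝ} {e : ℝ → Fin n → ℝ}

lemma contDiff_opA (hV : ContDiff ℝ 2 V₀) (s : ℝ) {u : (Fin n → ℝ) → ℂ}
    (hu : ContDiff ℝ 4 u) : ContDiff ℝ 2 (opA ε V₀ e s u) := by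
  have hpot : ContDiff ℝ 2 fun y => ((V₀ y + dotCLM (e s) y : ℝ) : ℂ) :=
    Complex.ofRealCLM.contDiff.comp (hV.add (dotCLM (e s)).contDiff)
  simp only [dotCLM_apply] at hpot
  exact (contDiff_const.mul (contDiff_laplacian (hu.of_le (by norm_num)))).sub
    ((contDiff_const.mul hpot).mul (hu.of_le (by norm_num)))

lemma opA_sub_opA (s₁ s₂ : ℝ) (u : (Fin n → ℝ) → ℂ) :
    (fun y => opA ε V₀ e s₂ u y - opA ε V₀ e s₁ u y)
      = fun y => -(Complex.I * (ε : ℂ)⁻¹)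
          * (Complex.ofRealCLM.comp (dotCLM (e s₂ - e s₁)) y * u y) := by
  funext y
  simp only [opA, ContinuousLinearMap.comp_apply, dotCLM_apply, Complex.ofRealCLM_apply,
    Pi.sub_apply, sub_mul, Finset.sum_sub_distrib]
  push_cast
  ring

lemma opA_commutator (hε : ε ≠ 0) (hV : ContDiff ℝ 2 V₀) {u : (Fin n → ℝ) → ℂ}
    (hu : ContDiff ℝ 4 u) (s₁ s₂ : ℝ) (x : Fin n → ℝ) :
    opA ε V₀ e s₁ (opA ε V₀ e s₂ u) x - opA ε V₀ e s₂ (opA ε V₀ e s₁ u) x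
      = 2 * fderiv ℝ u x (e s₂ - e s₁) := by
  set ℓ := Complex.ofRealCLM.comp (dotCLM (e s₂ - e s₁))
  have hu2 : ContDiff ℝ 2 u := hu.of_le (by norm_num)
  have hΔ : laplacian (opA ε V₀ e s₂ u) x - laplacian (opA ε V₀ e s₁ u) x
      = -(Complex.I * (ε : ℂ)⁻¹) * (ℓ x * laplacian u x + 2 * fderiv ℝ u x (e s₂ - e s₁)) := by
    have hℓ : ∀ j, ℓ (Pi.single j 1) = ((e s₂ - e s₁) j : ℂ) := fun j => by
      simp [ℓ, Pi.single_apply]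
    rw [← laplacian_sub (contDiff_opA hV s₂ hu) (contDiff_opA hV s₁ hu),
      opA_sub_opA, laplacian_const_mul (ℓ.contDiff.mul hu2), laplacian_clm_mul ℓ hu2]
    simp only [hℓ, sum_ofReal_mul_apply_single]
  have hpot : ((V₀ x + ∑ j, e s₂ j * x j : ℝ) : ℂ) - ((V₀ x + ∑ j, e s₁ j * x j : ℝ) : ℂ)
      = ℓ x := by
    simp only [ℓ, ContinuousLinearMap.comp_apply, dotCLM_apply, Complex.ofRealCLM_apply,
      Pi.sub_apply, sub_mul, Finset.sum_sub_distrib]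
    push_cast
    ring
  have hεε : (ε : ℂ) * (ε : ℂ)⁻¹ = 1 := mul_inv_cancel₀ (Complex.ofReal_ne_zero.mpr hε)
  simp only [opA]
  linear_combination (Complex.I * ε) * hΔ + (Complex.I ^ 2 * ε * (ε : ℂ)⁻¹ * laplacian u x) * hpot
    - (2 * Complex.I ^ 2 * fderiv ℝ u x (e s₂ - e s₁)) * hεε
    - 2 * fderiv ℝ u x (e s₂ - e s₁) * Complex.I_sq

end MagnusOperator

section DoubleIntegral

variable {E F : Type*} [NormedAddCommGroup E] [NormedSpace ℝ E] [CompleteSpace E]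
  [NormedAddCommGroup F] [NormedSpace ℝ F] [CompleteSpace F] {g : ℝ → E}

lemma integral_sub_apply_eq (hg : Continuous g) (ζ : ℝ) :
    ∫ ξ in (0:ℝ)..ζ, (g ζ - g ξ) = ζ • g ζ - ∫ ξ in (0:ℝ)..ζ, g ξ := by
  rw [intervalIntegral.integral_sub intervalIntegrable_const (hg.intervalIntegrable _ _),
    intervalIntegral.integral_const, sub_zero]

lemma integral_integral_sub_eq (hg : Continuous g) (h : ℝ) :
    ∫ ζ in (0:ℝ)..h, ∫ ξ in (0:ℝ)..ζ, (g ζ - g ξ) = ∫ ζ in (0:ℝ)..h, (2 * ζ - h) • g ζ := by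
  set G := fun b => ∫ ξ in (0:ℝ)..b, g ξ
  have hG : Continuous G :=
    intervalIntegral.continuous_primitive (fun _ _ => hg.intervalIntegrable _ _) 0
  have hζg : Continuous fun ζ : ℝ => ζ • g ζ := continuous_id.smul hg
  have hparts : ∫ ζ in (0:ℝ)..h, ζ • g ζ = h • G h - ∫ ζ in (0:ℝ)..h, G ζ := by
    simpa using intervalIntegral.integral_smul_deriv_eq_deriv_smul
      (fun ζ _ => hasDerivAt_id ζ) (fun ζ _ => hg.integral_hasStrictDerivAt 0 ζ |>.hasDerivAt)
      intervalIntegrable_const (hg.intervalIntegrable 0 h)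
  have hrhs : ∫ ζ in (0:ℝ)..h, (2 * ζ - h) • g ζ
      = (2 : ℝ) • (∫ ζ in (0:ℝ)..h, ζ • g ζ) - h • G h := by
    simp only [sub_smul, mul_smul]
    rw [intervalIntegral.integral_sub (f := fun ζ => (2 : ℝ) • ζ • g ζ) (g := fun ζ => h • g ζ)
      ((hζg.const_smul 2).intervalIntegrable _ _)
      ((hg.const_smul h).intervalIntegrable _ _), intervalIntegral.integral_smul,
      intervalIntegral.integral_smul]
  simp only [integral_sub_apply_eq hg]
  rw [intervalIntegral.integral_sub (hζg.intervalIntegrable _ _) (hG.intervalIntegrable _ _),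
    hrhs, hparts]
  module

lemma integral_integral_map_sub_eq (L : E →L[ℝ] F) (hg : Continuous g) (h : ℝ) :
    ∫ ζ in (0:ℝ)..h, ∫ ξ in (0:ℝ)..ζ, L (g ζ - g ξ)
      = L (∫ ζ in (0:ℝ)..h, (2 * ζ - h) • g ζ) := by
  have hinner : Continuous fun ζ => ∫ ξ in (0:ℝ)..ζ, (g ζ - g ξ) := by
    simp only [integral_sub_apply_eq hg]
    exact (continuous_id.smul hg).sub
      (intervalIntegral.continuous_primitive (fun _ _ => hg.intervalIntegrable _ _) 0)
  have hcomm : ∀ ζ, ∫ ξ in (0:ℝ)..ζ, L (g ζ - g ξ) = L (∫ ξ in (0:ℝ)..ζ, (g ζ - g ξ)) :=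
    fun ζ => L.intervalIntegral_comp_comm ((continuous_const.sub hg).intervalIntegrable 0 ζ)
  simp only [hcomm]
  rw [L.intervalIntegral_comp_comm (hinner.intervalIntegrable _ _), integral_integral_sub_eq hg]

end DoubleIntegral

section MagnusCoefficients

variable {n : ℕ} {e : ℝ → Fin n → ℝ} {t h : ℝ}

-- At `h = 0` the factor `1 / h` in `magnusR` is junk, but then both sides vanish.
lemma smul_magnusR : h • magnusR e t h = ∫ ζ in (0:ℝ)..h, e (t + ζ) := by
  rcases eq_or_ne h 0 with rfl | hh
  · simp
  · simp [magnusR, smul_smul, hh]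

lemma magnusS_eq_integral : magnusS e t h = ∫ ζ in (0:ℝ)..h, (2 * ζ - h) • e (t + ζ) := by
  rw [magnusS, ← intervalIntegral.integral_smul]
  congr 1 with ζ
  rw [smul_smul]
  ring_nf

lemma integral_potential (he : Continuous e) (V : ℝ) (x : Fin n → ℝ) :
    ∫ ζ in (0:ℝ)..h, (V + ∑ j, e (t + ζ) j * x j)
      = h * (V + ∑ j, magnusR e t h j * x j) := by
  have het : Continuous fun ζ => e (t + ζ) := he.comp (continuous_const_add t)
  have hdot : ∀ ζ, ∑ j, e (t + ζ) j * x j = dotCLM x (e (t + ζ)) := by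
    simp [mul_comm]
  simp only [hdot]
  rw [intervalIntegral.integral_add (g := fun ζ => dotCLM x (e (t + ζ)))
      intervalIntegrable_const (((dotCLM x).continuous.comp het).intervalIntegrable _ _),
    intervalIntegral.integral_const, (dotCLM x).intervalIntegral_comp_comm
      (het.intervalIntegrable _ _), ← smul_magnusR]
  simp only [smul_eq_mul, sub_zero, dotCLM_apply, Pi.smul_apply, mul_add, Finset.mul_sum]
  exact congrArg _ (Finset.sum_congr rfl fun j _ => by ring)

lemma integral_opA_apply {ε : ℝ} {V₀ : (Fin n → ℝ) → ℝ} (he : Continuous e)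
    (u : (Fin n → ℝ) → ℂ) (x : Fin n → ℝ) :
    ∫ ζ in (0:ℝ)..h, opA ε V₀ e (t + ζ) u x
      = Complex.I * h * ε * laplacian u x
        - Complex.I * h * (ε : ℂ)⁻¹ * ((V₀ x + ∑ j, magnusR e t h j * x j : ℝ) : ℂ) * u x := by
  simp only [opA]
  rw [intervalIntegral.integral_sub
      (g := fun ζ => Complex.I * (ε : ℂ)⁻¹ * ((V₀ x + ∑ j, e (t + ζ) j * x j : ℝ) : ℂ) * u x)
      intervalIntegrable_const ((by fun_prop : Continuous _).intervalIntegrable _ _),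
    intervalIntegral.integral_const, intervalIntegral.integral_mul_const,
    intervalIntegral.integral_const_mul, intervalIntegral.integral_ofReal,
    integral_potential he]
  simp only [sub_zero, Complex.real_smul]
  push_cast
  ring

end MagnusCoefficients

theorem magnus_two_term_eq_general {n : ℕ} (ε : ℝ) (hε : ε ≠ 0)
    (V₀ : (Fin n → ℝ) → ℝ) (hV : ContDiff ℝ 2 V₀)
    (e : ℝ → Fin n → ℝ) (he : Continuous e) (t h : ℝ)
    (u : (Fin n → ℝ) → ℂ) (hu : ContDiff ℝ 4 u) (x : Fin n → ℝ) :
    (∫ ζ in (0:ℝ)..h, opA ε V₀ e (t + ζ) u x)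
      - (1 / 2 : ℂ) * ∫ ζ in (0:ℝ)..h, ∫ ξ in (0:ℝ)..ζ,
          (opA ε V₀ e (t + ξ) (opA ε V₀ e (t + ζ) u) x
            - opA ε V₀ e (t + ζ) (opA ε V₀ e (t + ξ) u) x)
      = Complex.I * (h : ℂ) * (ε : ℂ) * laplacian u x
          - Complex.I * (h : ℂ) * (ε : ℂ)⁻¹
              * ((V₀ x + ∑ j : Fin n, magnusR e t h j * x j : ℝ) : ℂ) * u x
          - ∑ j : Fin n, ((magnusS e t h j : ℝ) : ℂ) * fderiv ℝ u x (Pi.single j 1) := by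
  simp only [opA_commutator hε hV hu, intervalIntegral.integral_const_mul,
    integral_opA_apply he, sum_ofReal_mul_apply_single]
  rw [integral_integral_map_sub_eq (g := fun ζ => e (t + ζ)) (fderiv ℝ u x) (by fun_prop),
    ← magnusS_eq_integral]
  ring

/-- The truncated Magnus expansion
`Θ₂ = ∫₀ʰ 𝒜(t+ζ) dζ − ½ ∫₀ʰ∫₀^ζ [𝒜(t+ξ), 𝒜(t+ζ)] dξ dζ` equals, pointwise,
`i h ε Δu − i h ε⁻¹ (V₀ + r(t,h)ᵀ x) u − s(t,h)ᵀ ∇u`. -/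
theorem magnus_two_term_eq {n : ℕ} (ε : ℝ) (hε : ε ≠ 0)
    (V₀ : (Fin n → ℝ) → ℝ) (hV : ContDiff ℝ 2 V₀)
    (e : ℝ → Fin n → ℝ) (he : Continuous e) (t h : ℝ) (hh : 0 < h)
    (u : (Fin n → ℝ) → ℂ) (hu : ContDiff ℝ 4 u) (x : Fin n → ℝ) :
    (∫ ζ in (0:ℝ)..h, opA ε V₀ e (t + ζ) u x)
      - (1 / 2 : ℂ) * ∫ ζ in (0:ℝ)..h, ∫ ξ in (0:ℝ)..ζ,
          (opA ε V₀ e (t + ξ) (opA ε V₀ e (t + ζ) u) x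
            - opA ε V₀ e (t + ζ) (opA ε V₀ e (t + ξ) u) x)
      = Complex.I * (h : ℂ) * (ε : ℂ) * laplacian u x
          - Complex.I * (h : ℂ) * (ε : ℂ)⁻¹
              * ((V₀ x + ∑ j : Fin n, magnusR e t h j * x j : ℝ) : ℂ) * u x
          - ∑ j : Fin n, ((magnusS e t h j : ℝ) : ℂ) * fderiv ℝ u x (Pi.single j 1) :=
  magnus_two_term_eq_general ε hε V₀ hV e he t h u hu x
end

section
/- Let e : ℝ → ℝⁿ, t ∈ ℝ, h > 0, and suppose e is Lipschitz with constant L on [t, t+h], i.e. ‖e(t₁) − e(t₂)‖ ≤ L|t₁ − t₂| for all t₁, t₂ ∈ [t, t+h]. Then the vector s(t,h) = 2 ∫₀ʰ (ζ − h/2) e(t+ζ) dζ satisfies ‖s(t,h)‖ ≤ L h³ / 6. In particular s(t,h) = O(h³) as h → 0⁺. -/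
/-!
The weight `ζ - h / 2` has mean zero on `[0, h]`, so `e (t + ζ)` may be replaced by
`e (t + ζ) - e (t + h / 2)`, which the Lipschitz bound makes at most `L |ζ - h / 2|` in norm.
The integrand is then bounded by `L (ζ - h / 2)²`, whose integral over `[0, h]` is `L h³ / 12`.
-/
open Set intervalIntegral
open scoped NNReal

theorem integral_sub_midpoint_eq_zero (a b : ℝ) : ∫ x in a..b, (x - (a + b) / 2) = 0 := by
  rw [integral_sub intervalIntegrable_id intervalIntegrable_const, integral_id, integral_const,
    smul_eq_mul]
  ring

theorem integral_sub_midpoint_sq (a b : ℝ) :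
    ∫ x in a..b, (x - (a + b) / 2) ^ 2 = (b - a) ^ 3 / 12 := by
  rw [integral_comp_sub_right (· ^ 2), integral_pow]
  ring

section

variable {E : Type*} [NormedAddCommGroup E] [NormedSpace ℝ E] [CompleteSpace E]

theorem norm_integral_sub_midpoint_smul_le {f : ℝ → E} {K : ℝ≥0} {a b : ℝ} (hab : a ≤ b)
    (hf : LipschitzOnWith K f (Icc a b)) :
    ‖∫ x in a..b, (x - (a + b) / 2) • f x‖ ≤ K * (b - a) ^ 3 / 12 := by
  have hm : (a + b) / 2 ∈ Icc a b := ⟨by linarith, by linarith⟩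
  set m := (a + b) / 2
  have hf_int : IntervalIntegrable (fun x ↦ (x - m) • f x) MeasureTheory.volume a b :=
    ((continuousOn_id.sub continuousOn_const).smul hf.continuousOn).intervalIntegrable_of_Icc hab
  have hcentre : ∫ x in a..b, (x - m) • f x = ∫ x in a..b, (x - m) • (f x - f m) := by
    simp_rw [smul_sub]
    rw [integral_sub hf_int ((by fun_prop : Continuous _).intervalIntegrable _ _),
      intervalIntegral.integral_smul_const, integral_sub_midpoint_eq_zero,
      zero_smul, sub_zero]
  have hpointwise : ∀ x ∈ Ioc a b, ‖(x - m) • (f x - f m)‖ ≤ K * (x - m) ^ 2 := by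
    intro x hx
    calc ‖(x - m) • (f x - f m)‖ = |x - m| * ‖f x - f m‖ := by rw [norm_smul, Real.norm_eq_abs]
      _ ≤ |x - m| * (K * |x - m|) := by
          gcongr
          exact hf.norm_sub_le (Ioc_subset_Icc_self hx) hm
      _ = K * (x - m) ^ 2 := by rw [mul_left_comm, ← sq, sq_abs]
  calc ‖∫ x in a..b, (x - m) • f x‖
      ≤ ∫ x in a..b, (K : ℝ) * (x - m) ^ 2 := by
        rw [hcentre]
        exact norm_integral_le_of_norm_le hab (.of_forall hpointwise)
          ((by fun_prop : Continuous _).intervalIntegrable _ _)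
    _ = K * (b - a) ^ 3 / 12 := by rw [integral_const_mul, integral_sub_midpoint_sq, mul_div_assoc]

end

theorem magnus_drift_bound_general {n : ℕ} (e : ℝ → EuclideanSpace ℝ (Fin n))
    (t h L : ℝ) (hh : 0 < h)
    (hL : ∀ t₁ ∈ Set.Icc t (t + h), ∀ t₂ ∈ Set.Icc t (t + h),
      ‖e t₁ - e t₂‖ ≤ L * |t₁ - t₂|) :
    ‖(2 : ℝ) • ∫ ζ in (0:ℝ)..h, (ζ - h / 2) • e (t + ζ)‖ ≤ L * h ^ 3 / 6 := by
  have hL_nonneg : 0 ≤ L := by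
    have hends := hL t (left_mem_Icc.2 (by linarith)) (t + h) (right_mem_Icc.2 (by linarith))
    rw [sub_add_cancel_left, abs_neg, abs_of_pos hh] at hends
    exact nonneg_of_mul_nonneg_left ((norm_nonneg _).trans hends) hh
  have hlip : LipschitzOnWith L.toNNReal e (Icc t (t + h)) :=
    .of_dist_le_mul fun x hx y hy ↦ by
      simpa [dist_eq_norm, Real.dist_eq, Real.coe_toNNReal _ hL_nonneg] using hL x hx y hy
  have hshift : ∫ ζ in (0:ℝ)..h, (ζ - h / 2) • e (t + ζ)
      = ∫ x in t..t + h, (x - (t + (t + h)) / 2) • e x := by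
    have hsubst :=
      integral_comp_add_left (a := 0) (b := h) (fun x ↦ (x - (t + (t + h)) / 2) • e x) t
    rw [add_zero] at hsubst
    rw [← hsubst]
    congr 1 with ζ
    ring_nf
  have hbound := norm_integral_sub_midpoint_smul_le (by linarith) hlip
  rw [Real.coe_toNNReal _ hL_nonneg, add_sub_cancel_left] at hbound
  rw [norm_smul, hshift, Real.norm_two]
  linarith

/-- If `e` is Lipschitz with constant `L` on `[t, t+h]`, then the drift vector
`s(t,h) = 2 ∫₀ʰ (ζ − h/2) e(t+ζ) dζ` satisfies `‖s(t,h)‖ ≤ L h³ / 6`,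
so in particular `s(t,h) = O(h³)`. -/
theorem magnus_drift_bound {n : ℕ} (e : ℝ → EuclideanSpace ℝ (Fin n))
    (he : Continuous e) (t h L : ℝ) (hh : 0 < h)
    (hL : ∀ t₁ ∈ Set.Icc t (t + h), ∀ t₂ ∈ Set.Icc t (t + h),
      ‖e t₁ - e t₂‖ ≤ L * |t₁ - t₂|) :
    ‖(2 : ℝ) • ∫ ζ in (0:ℝ)..h, (ζ - h / 2) • e (t + ζ)‖ ≤ L * h ^ 3 / 6 :=
  magnus_drift_bound_general e t h L hh hL
end

section
/- Let ε ≠ 0, h > 0, s ∈ ℝⁿ, let Ṽ : ℝⁿ → ℝ be twice continuously differentiable, and define the operators X u = i h ε Δu − sᵀ∇u and Y u = −i h ε⁻¹ Ṽ·u on twice continuously differentiable u : ℝⁿ → ℂ. Then the first-order drift term makes no contribution to the nested commutator, which again reduces to a multiplication operator: for all such u and all x ∈ ℝⁿ, ([[X,Y],Y]u)(x) = −2 i h³ ε⁻¹ ‖(∇Ṽ)(x)‖² u(x). -/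
/-!
For a multiplication operator `W`, the nested commutator `[[A, W], W]` of a first-order
operator `A = ∂ᵥ` vanishes, because `[∂ᵥ, W]` is multiplication by `∂ᵥW`, which commutes
with `W`. For `A = ∂ᵥ²` the Leibniz rule leaves only the cross term: `[[∂ᵥ², W], W] = 2 (∂ᵥW)²`.
Summing over the coordinate directions, the drift drops out and the Laplacian contributes
`2 i h ε ‖∇W‖²`; with `W = −i h ε⁻¹ Ṽ` this is `−2 i h³ ε⁻¹ ‖∇Ṽ‖²`.
-/

open scoped BigOperators

/-- The drifted kinetic operator `X u = i h ε Δu − sᵀ∇u`. -/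
noncomputable def opXdrift {n : ℕ} (ε h : ℝ) (s : Fin n → ℝ)
    (u : (Fin n → ℝ) → ℂ) : (Fin n → ℝ) → ℂ :=
  fun x => Complex.I * (h : ℂ) * (ε : ℂ) * laplacian u x
    - ∑ j : Fin n, (s j : ℂ) * fderiv ℝ u x (Pi.single j 1)

/-- The potential operator `Y u = −i h ε⁻¹ Ṽ·u`. -/
noncomputable def opY {n : ℕ} (ε h : ℝ) (V : (Fin n → ℝ) → ℝ)
    (u : (Fin n → ℝ) → ℂ) : (Fin n → ℝ) → ℂ :=
  fun x => -(Complex.I * (h : ℂ) * (ε : ℂ)⁻¹) * (V x : ℂ) * u x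

section Leibniz

variable {E 𝔸 : Type*} [NormedAddCommGroup E] [NormedSpace ℝ E]
  [NormedCommRing 𝔸] [NormedAlgebra ℝ 𝔸] {f g W u : E → 𝔸}

theorem fderiv_fun_mul_apply {x : E} (hf : DifferentiableAt ℝ f x)
    (hg : DifferentiableAt ℝ g x) (v : E) :
    fderiv ℝ (fun y => f y * g y) x v = fderiv ℝ f x v * g x + f x * fderiv ℝ g x v := by
  rw [fderiv_fun_mul hf hg, add_apply, smul_apply,
    smul_apply, smul_eq_mul, smul_eq_mul, mul_comm (g x), add_comm]

theorem ContDiff.differentiable_fderiv_apply (hf : ContDiff ℝ 2 f) (v : E) :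
    Differentiable ℝ (fun y => fderiv ℝ f y v) :=
  ((hf.fderiv_right (by norm_num)).clm_apply contDiff_const).differentiable one_ne_zero

theorem fderiv_fderiv_fun_mul_apply (hf : ContDiff ℝ 2 f) (hg : ContDiff ℝ 2 g) (x v : E) :
    fderiv ℝ (fun y => fderiv ℝ (fun z => f z * g z) y v) x v
      = fderiv ℝ (fun y => fderiv ℝ f y v) x v * g x
        + 2 * (fderiv ℝ f x v * fderiv ℝ g x v)
        + f x * fderiv ℝ (fun y => fderiv ℝ g y v) x v := by
  have hf₁ : Differentiable ℝ f := hf.differentiable two_ne_zero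
  have hg₁ : Differentiable ℝ g := hg.differentiable two_ne_zero
  have hf₂ := hf.differentiable_fderiv_apply v
  have hg₂ := hg.differentiable_fderiv_apply v
  have hfirst : (fun y => fderiv ℝ (fun z => f z * g z) y v)
      = fun y => fderiv ℝ f y v * g y + f y * fderiv ℝ g y v :=
    funext fun y => fderiv_fun_mul_apply (hf₁ y) (hg₁ y) v
  rw [hfirst, fderiv_fun_add ((hf₂ x).fun_mul (hg₁ x)) ((hf₁ x).fun_mul (hg₂ x)),
    add_apply, fderiv_fun_mul_apply (hf₂ x) (hg₁ x),
    fderiv_fun_mul_apply (hf₁ x) (hg₂ x)]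
  ring

theorem fderiv_nestedComm_mul_apply (hW : Differentiable ℝ W) (hu : Differentiable ℝ u)
    (x v : E) :
    fderiv ℝ (fun y => W y * (W y * u y)) x v
        - 2 * (W x * fderiv ℝ (fun y => W y * u y) x v)
        + W x * (W x * fderiv ℝ u x v) = 0 := by
  rw [fderiv_fun_mul_apply (hW x) ((hW x).fun_mul (hu x)),
    fderiv_fun_mul_apply (hW x) (hu x)]
  ring

theorem fderiv_fderiv_nestedComm_mul_apply (hW : ContDiff ℝ 2 W) (hu : ContDiff ℝ 2 u)
    (x v : E) :
    fderiv ℝ (fun y => fderiv ℝ (fun z => W z * (W z * u z)) y v) x v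
        - 2 * (W x * fderiv ℝ (fun y => fderiv ℝ (fun z => W z * u z) y v) x v)
        + W x * (W x * fderiv ℝ (fun y => fderiv ℝ u y v) x v)
      = 2 * fderiv ℝ W x v ^ 2 * u x := by
  have hWu := hW.mul hu
  rw [fderiv_fderiv_fun_mul_apply hW hWu, fderiv_fderiv_fun_mul_apply hW hu,
    fderiv_fun_mul_apply ((hW.differentiable two_ne_zero) x) ((hu.differentiable two_ne_zero) x)]
  ring

end Leibniz

theorem fderiv_const_mul_ofReal_apply {E : Type*} [NormedAddCommGroup E] [NormedSpace ℝ E]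
    {V : E → ℝ} {x : E} (hV : DifferentiableAt ℝ V x) (c : ℂ) (v : E) :
    fderiv ℝ (fun y => c * (V y : ℂ)) x v = c * fderiv ℝ V x v := by
  have hderiv : HasFDerivAt (fun y => c * (V y : ℂ))
      (c • Complex.ofRealCLM.comp (fderiv ℝ V x)) x :=
    (Complex.ofRealCLM.hasFDerivAt.comp x hV.hasFDerivAt).const_mul c
  rw [hderiv.fderiv]
  rfl

theorem opXdrift_nestedComm_mul {n : ℕ} (ε h : ℝ) (s : Fin n → ℝ) {W u : (Fin n → ℝ) → ℂ}
    (hW : ContDiff ℝ 2 W) (hu : ContDiff ℝ 2 u) (x : Fin n → ℝ) :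
    opXdrift ε h s (fun y => W y * (W y * u y)) x
        - 2 * (W x * opXdrift ε h s (fun y => W y * u y) x)
        + W x * (W x * opXdrift ε h s u x)
      = Complex.I * h * ε * (2 * ∑ j, fderiv ℝ W x (Pi.single j 1) ^ 2) * u x := by
  simp only [opXdrift, laplacian, sub_eq_add_neg, mul_add, mul_neg, neg_add,
    Finset.mul_sum, Finset.sum_mul, ← Finset.sum_neg_distrib, ← Finset.sum_add_distrib]
  refine Finset.sum_congr rfl fun j _ => ?_
  linear_combination Complex.I * h * ε * fderiv_fderiv_nestedComm_mul_apply hW hu x (Pi.single j 1)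
    - (s j : ℂ) * fderiv_nestedComm_mul_apply (hW.differentiable two_ne_zero)
      (hu.differentiable two_ne_zero) x (Pi.single j 1)

theorem nested_commutator_with_drift_general {n : ℕ} (ε h : ℝ)
    (s : Fin n → ℝ) (V : (Fin n → ℝ) → ℝ) (hV : ContDiff ℝ 2 V)
    (u : (Fin n → ℝ) → ℂ) (hu : ContDiff ℝ 2 u) (x : Fin n → ℝ) :
    opXdrift ε h s (opY ε h V (opY ε h V u)) x
        - 2 * opY ε h V (opXdrift ε h s (opY ε h V u)) x
        + opY ε h V (opY ε h V (opXdrift ε h s u)) x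
      = -2 * Complex.I * (h : ℂ) ^ 3 * (ε : ℂ)⁻¹
          * ((∑ j : Fin n, (fderiv ℝ V x (Pi.single j 1)) ^ 2 : ℝ) : ℂ) * u x := by
  set c : ℂ := -(Complex.I * h * (ε : ℂ)⁻¹)
  have key := opXdrift_nestedComm_mul ε h s (W := fun y => c * (V y : ℂ))
    (contDiff_const.mul (Complex.ofRealCLM.contDiff.comp hV)) hu x
  simp only [fderiv_const_mul_ofReal_apply ((hV.differentiable two_ne_zero) x), mul_pow,
    ← Finset.mul_sum] at key
  have hinv : (ε : ℂ)⁻¹ * ε * (ε : ℂ)⁻¹ = (ε : ℂ)⁻¹ := by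
    simpa only [inv_inv] using mul_inv_mul_cancel (ε : ℂ)⁻¹
  -- `opY ε h V` is multiplication by `c * V`, so the left side is that of `key` by unfolding.
  refine key.trans ?_
  simp only [c]
  push_cast
  linear_combination (2 * Complex.I * h ^ 3 * (∑ j, (fderiv ℝ V x (Pi.single j 1) : ℂ) ^ 2) * u x)
    * ((ε * (ε : ℂ)⁻¹ ^ 2) * Complex.I_sq - hinv)

/-- The first-order drift `−sᵀ∇` makes no contribution to the nested commutator:
`[[X,Y],Y] = X∘Y∘Y − 2 Y∘X∘Y + Y∘Y∘X` is again multiplication by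
`−2ih³ε⁻¹‖∇Ṽ‖²`. -/
theorem nested_commutator_with_drift {n : ℕ} (ε h : ℝ) (hε : ε ≠ 0) (hh : 0 < h)
    (s : Fin n → ℝ) (V : (Fin n → ℝ) → ℝ) (hV : ContDiff ℝ 2 V)
    (u : (Fin n → ℝ) → ℂ) (hu : ContDiff ℝ 2 u) (x : Fin n → ℝ) :
    opXdrift ε h s (opY ε h V (opY ε h V u)) x
        - 2 * opY ε h V (opXdrift ε h s (opY ε h V u)) x
        + opY ε h V (opY ε h V (opXdrift ε h s u)) x
      = -2 * Complex.I * (h : ℂ) ^ 3 * (ε : ℂ)⁻¹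
          * ((∑ j : Fin n, (fderiv ℝ V x (Pi.single j 1)) ^ 2 : ℝ) : ℂ) * u x :=
  nested_commutator_with_drift_general ε h s V hV u hu x
end

section
/- Let n ≥ 1 and let X, Y : (0,∞) → Matrix (Fin n) (Fin n) ℂ be matrix-valued functions such that ‖X(h)‖ = O(h) and ‖Y(h)‖ = O(h³) as h → 0⁺. Then the Strang splitting approximates the exponential of the sum to fifth order: ‖ exp(Y(h)/2) · exp(X(h)) · exp(Y(h)/2) − exp(X(h) + Y(h)) ‖ = O(h⁵) as h → 0⁺. -/
open scoped Matrix Topology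
open Asymptotics NormedSpace

attribute [local instance] Matrix.linftyOpNormedRing Matrix.linftyOpNormedAlgebra

/-!
Write `M = exp a + b + (ab + ba)/2`. With `a = O(ρ)` and `b = O(ρ³)`, both the Strang product
`exp(b/2) exp(a) exp(b/2)` and `exp(a + b)` equal `M + O(ρ⁵)`. For the product this needs only
the first-order Taylor remainders of `exp(a)` and `exp(b/2)`; for `exp(a + b)` one compares
the Taylor polynomials of degree four of `exp(a + b)` and `exp(a)`, using
`(a + b)^k - a^k = O(ρ^(k-1) ρ³)`.
-/

open Filter Finset
open scoped Nat

variable {α 𝕂 𝔸 E : Type*} [RCLike 𝕂] [NormedRing 𝔸] [NormedAlgebra 𝕂 𝔸]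

theorem isBigO_exp_sub_sum_range [CompleteSpace 𝔸] (N : ℕ) :
    (fun x : 𝔸 => exp x - ∑ k ∈ range N, (k !⁻¹ : 𝕂) • x ^ k) =O[𝓝 0] (‖·‖ ^ N) := by
  simpa [FormalMultilinearSeries.partialSum, expSeries_apply_eq] using
    (exp_hasFPowerSeriesAt_zero (𝕂 := 𝕂) (𝔸 := 𝔸)).isBigO_sub_partialSum_pow N

namespace Asymptotics.IsBigO

variable {l : Filter α} {ρ : α → ℝ}

theorem mul_pow_add {f g : α → 𝔸} {i j : ℕ} (hf : f =O[l] (ρ · ^ i))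
    (hg : g =O[l] (ρ · ^ j)) : (fun t => f t * g t) =O[l] (ρ · ^ (i + j)) := by
  simpa only [pow_add] using hf.mul hg

theorem pow_of_le [Norm E] {f : α → E} {i j : ℕ} (hρ : Tendsto ρ l (𝓝 0))
    (hf : f =O[l] (ρ · ^ j)) (hij : i ≤ j) : f =O[l] (ρ · ^ i) := by
  refine hf.trans ?_
  rcases hij.eq_or_lt with rfl | hlt
  · exact isBigO_refl _ _
  · exact (isLittleO_pow_pow hlt).isBigO.comp_tendsto hρ

theorem exp_sub_sum_range [CompleteSpace 𝔸] {a : α → 𝔸} {m : ℕ} (hρ : Tendsto ρ l (𝓝 0))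
    (hm : m ≠ 0) (ha : a =O[l] (ρ · ^ m)) (N : ℕ) :
    (fun t => exp (a t) - ∑ k ∈ range N, (k !⁻¹ : 𝕂) • a t ^ k) =O[l] (ρ · ^ (m * N)) := by
  have ha0 : Tendsto a l (𝓝 0) := ha.trans_tendsto (by simpa [zero_pow hm] using hρ.pow m)
  simpa only [pow_mul, Function.comp_def] using
    ((isBigO_exp_sub_sum_range (𝕂 := 𝕂) N).comp_tendsto ha0).trans (ha.norm_left.pow N)

theorem add_pow_sub_pow {a b : α → 𝔸} {g g' : α → ℝ} (ha : a =O[l] g)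
    (hab : (fun t => a t + b t) =O[l] g) (hb : b =O[l] g') :
    ∀ k : ℕ, (fun t => (a t + b t) ^ (k + 1) - a t ^ (k + 1)) =O[l] (fun t => g t ^ k * g' t)
  | 0 => by simpa using hb
  | k + 1 => by
    have telescope : ∀ t, (a t + b t) ^ (k + 2) - a t ^ (k + 2)
        = (a t + b t) * ((a t + b t) ^ (k + 1) - a t ^ (k + 1)) + b t * a t ^ (k + 1) := by
      intro t
      rw [pow_succ' _ (k + 1), pow_succ' (a t) (k + 1)]
      noncomm_ring
    simp_rw [telescope]
    exact ((hab.mul (add_pow_sub_pow ha hab hb k)).congr_right fun t => by ring).add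
      ((hb.mul (ha.pow (k + 1))).congr_right fun t => by ring)

end Asymptotics.IsBigO

section Strang

variable [CompleteSpace 𝔸] {l : Filter α} {ρ : α → ℝ} {a b : α → 𝔸}

theorem isBigO_exp_half_mul_exp_mul_exp_half_sub (hρ : Tendsto ρ l (𝓝 0))
    (ha : a =O[l] ρ) (hb : b =O[l] (ρ · ^ 3)) :
    (fun t => exp ((1 / 2 : 𝕂) • b t) * exp (a t) * exp ((1 / 2 : 𝕂) • b t)
      - (exp (a t) + b t + (1 / 2 : 𝕂) • (a t * b t + b t * a t))) =O[l] (ρ · ^ 5) := by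
  set c : α → 𝔸 := fun t => (1 / 2 : 𝕂) • b t
  have ha1 : a =O[l] (ρ · ^ 1) := by simpa using ha
  have hc : c =O[l] (ρ · ^ 3) := hb.const_smul_left (1 / 2 : 𝕂)
  have hexpa : (fun t => exp (a t)) =O[l] (ρ · ^ 0) := by
    simpa using ha1.exp_sub_sum_range (𝕂 := 𝕂) hρ one_ne_zero 0
  have hexpc : (fun t => exp (c t)) =O[l] (ρ · ^ 0) := by
    simpa using hc.exp_sub_sum_range (𝕂 := 𝕂) hρ three_ne_zero 0
  have hrema : (fun t => exp (a t) - (1 + a t)) =O[l] (ρ · ^ 2) := by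
    simpa [sum_range_succ] using ha1.exp_sub_sum_range (𝕂 := 𝕂) hρ one_ne_zero 2
  have hremc : (fun t => exp (c t) - (1 + c t)) =O[l] (ρ · ^ 6) := by
    simpa [sum_range_succ] using hc.exp_sub_sum_range (𝕂 := 𝕂) hρ three_ne_zero 2
  have expand : ∀ t, exp (c t) * exp (a t) * exp (c t)
      - (exp (a t) + b t + (1 / 2 : 𝕂) • (a t * b t + b t * a t))
      = c t * (exp (a t) - (1 + a t)) + (exp (a t) - (1 + a t)) * c t
        + c t * exp (a t) * c t + (exp (a t) + c t * exp (a t)) * (exp (c t) - (1 + c t))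
        + (exp (c t) - (1 + c t)) * exp (a t) * exp (c t) := by
    intro t
    have hbc : b t = c t + c t := by simp [c, ← add_smul]; norm_num
    have hab : (1 / 2 : 𝕂) • (a t * b t + b t * a t) = a t * c t + c t * a t := by
      simp [c, smul_add]
    rw [hab, hbc]
    noncomm_ring
  refine IsBigO.congr_left ?_ fun t => (expand t).symm
  refine ((((hc.mul_pow_add hrema).add (hrema.mul_pow_add hc)).add ?_).add ?_).add ?_
  · exact ((hc.mul_pow_add hexpa).mul_pow_add hc).pow_of_le hρ (by norm_num)
  · have hfactor := hexpa.add ((hc.mul_pow_add hexpa).pow_of_le hρ (by norm_num))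
    exact (hfactor.mul_pow_add hremc).pow_of_le hρ (by norm_num)
  · exact ((hremc.mul_pow_add hexpa).mul_pow_add hexpc).pow_of_le hρ (by norm_num)

theorem isBigO_exp_add_sub (hρ : Tendsto ρ l (𝓝 0)) (ha : a =O[l] ρ) (hb : b =O[l] (ρ · ^ 3)) :
    (fun t => exp (a t + b t)
      - (exp (a t) + b t + (1 / 2 : 𝕂) • (a t * b t + b t * a t))) =O[l] (ρ · ^ 5) := by
  have ha1 : a =O[l] (ρ · ^ 1) := by simpa using ha
  have hab : (fun t => a t + b t) =O[l] (ρ · ^ 1) := ha1.add (hb.pow_of_le hρ (by norm_num))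
  have htaila := ha1.exp_sub_sum_range (𝕂 := 𝕂) hρ one_ne_zero 5
  have htailab := hab.exp_sub_sum_range (𝕂 := 𝕂) hρ one_ne_zero 5
  have h3 : (fun t => (a t + b t) ^ 3 - a t ^ 3) =O[l] (ρ · ^ 5) := by
    simpa [← pow_add] using ha1.add_pow_sub_pow hab hb 2
  have h4 : (fun t => (a t + b t) ^ 4 - a t ^ 4) =O[l] (ρ · ^ 5) := by
    refine IsBigO.pow_of_le hρ ?_ (show 5 ≤ 6 by norm_num)
    simpa [← pow_add] using ha1.add_pow_sub_pow hab hb 3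
  have expand : ∀ t, exp (a t + b t)
      - (exp (a t) + b t + (1 / 2 : 𝕂) • (a t * b t + b t * a t))
      = (exp (a t + b t) - ∑ k ∈ range 5, (k !⁻¹ : 𝕂) • (a t + b t) ^ k)
        - (exp (a t) - ∑ k ∈ range 5, (k !⁻¹ : 𝕂) • a t ^ k)
        + (1 / 2 : 𝕂) • (b t * b t) + (1 / 6 : 𝕂) • ((a t + b t) ^ 3 - a t ^ 3)
        + (1 / 24 : 𝕂) • ((a t + b t) ^ 4 - a t ^ 4) := by
    intro t
    simp only [sum_range_succ, sum_range_zero, Nat.factorial, Nat.cast_one, pow_succ, pow_zero]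
    norm_num
    simp only [mul_add, add_mul, smul_add, smul_sub]
    module
  refine IsBigO.congr_left ?_ fun t => (expand t).symm
  refine (((htailab.sub htaila).add ?_).add (h3.const_smul_left (1 / 6 : 𝕂))).add
    (h4.const_smul_left (1 / 24 : 𝕂))
  exact ((hb.mul_pow_add hb).pow_of_le hρ (by norm_num)).const_smul_left (1 / 2 : 𝕂)

theorem isBigO_strang_splitting (hρ : Tendsto ρ l (𝓝 0)) (ha : a =O[l] ρ)
    (hb : b =O[l] (ρ · ^ 3)) :
    (fun t => exp ((1 / 2 : 𝕂) • b t) * exp (a t) * exp ((1 / 2 : 𝕂) • b t) - exp (a t + b t))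
      =O[l] (ρ · ^ 5) := by
  simpa using (isBigO_exp_half_mul_exp_mul_exp_half_sub (𝕂 := 𝕂) hρ ha hb).sub
    (isBigO_exp_add_sub (𝕂 := 𝕂) hρ ha hb)

end Strang

theorem strang_splitting_fifth_order_general {n : ℕ}
    (X Y : ℝ → Matrix (Fin n) (Fin n) ℂ)
    (hX : X =O[𝓝[>] (0:ℝ)] fun h => h)
    (hY : Y =O[𝓝[>] (0:ℝ)] fun h => h ^ 3) :
    (fun h => exp ((1 / 2 : ℂ) • Y h) * exp (X h) * exp ((1 / 2 : ℂ) • Y h)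
        - exp (X h + Y h)) =O[𝓝[>] (0:ℝ)] fun h => h ^ 5 :=
  isBigO_strang_splitting (tendsto_nhdsWithin_of_tendsto_nhds tendsto_id) hX hY

/-- If `X(h) = O(h)` and `Y(h) = O(h³)` as `h → 0⁺`, then the Strang splitting
`exp(Y/2) exp(X) exp(Y/2)` approximates `exp(X+Y)` to fifth order. -/
theorem strang_splitting_fifth_order {n : ℕ} (hn : 1 ≤ n)
    (X Y : ℝ → Matrix (Fin n) (Fin n) ℂ)
    (hX : X =O[𝓝[>] (0:ℝ)] fun h => h)
    (hY : Y =O[𝓝[>] (0:ℝ)] fun h => h ^ 3) :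
    (fun h => exp ((1 / 2 : ℂ) • Y h) * exp (X h) * exp ((1 / 2 : ℂ) • Y h)
        - exp (X h + Y h)) =O[𝓝[>] (0:ℝ)] fun h => h ^ 5 :=
  strang_splitting_fifth_order_general X Y hX hY
end
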